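/- arXiv:2601.09122 — 2 statements merged into one kernel-verified Lean document; each statement's English description precedes it below -/
import Mathlib

section
/- Corollary C.1 (Wasserstein convergence in probability from total-variation convergence plus bounded moments). Let (X,d) be a Polish metric space, fix reals s ≥ 1 and m > s and a point x₀ ∈ X. For each n let (Ω_n, P_n) be a probability space and let μ̂_n, ν̂_n be random Borel probability measures on X defined on Ω_n. If d_TV(μ̂_n, ν̂_n) → 0 in P_n-probability and the sequence M_m(μ̂_n, ν̂_n) := ∫ d(x,x₀)^m dμ̂_n(x) + ∫ d(y,x₀)^m dν̂_n(y) is O_P(1), then d_{W_s}(μ̂_n, ν̂_n) → 0 in P_n-probability, i.e., for every t > 0, P_n( d_{W_s}(μ̂_n, ν̂_n) > t ) → 0. -/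
open MeasureTheory Filter BigOperators

noncomputable section

/-- Multivariate Gaussian density `φ(θ | μ, S)` with mean `μ` and covariance matrix `S`. -/
def gaussDensity (p : ℕ) (μ : EuclideanSpace ℝ (Fin p))
    (S : Matrix (Fin p) (Fin p) ℝ) (θ : EuclideanSpace ℝ (Fin p)) : ℝ :=
  (2 * Real.pi) ^ (-(p : ℝ) / 2) * S.det ^ (-(1 : ℝ) / 2) *
    Real.exp (-(1 / 2) * ∑ i, ∑ j, (θ i - μ i) * S⁻¹ i j * (θ j - μ j))

/-- The tempered (`α`-)posterior density. -/
def post {p : ℕ} {Ω : Type} (L : Ω → EuclideanSpace ℝ (Fin p) → ℝ)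
    (prior : EuclideanSpace ℝ (Fin p) → ℝ) (α : ℝ) (ω : Ω)
    (θ : EuclideanSpace ℝ (Fin p)) : ℝ :=
  L ω θ ^ α * prior θ / ∫ θ', L ω θ' ^ α * prior θ'

/-- Convergence in `P n`-probability of a sequence of random vectors to a constant. -/
def TendstoInProb {Ω : ℕ → Type} [∀ n, MeasurableSpace (Ω n)]
    (P : ∀ n, Measure (Ω n)) {E : Type*} [NormedAddCommGroup E]
    (Y : ∀ n, Ω n → E) (y : E) : Prop :=
  ∀ ε : ℝ, 0 < ε →
    Tendsto (fun n => P n {ω | ε < ‖Y n ω - y‖}) atTop (nhds 0)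

/-- Assumption (A0): consistency and asymptotic normality of the MLE. -/
def A0 {p : ℕ} {Ω : ℕ → Type} [∀ n, MeasurableSpace (Ω n)] (P : ∀ n, Measure (Ω n))
    (θhat : ∀ n, Ω n → EuclideanSpace ℝ (Fin p)) (θstar : EuclideanSpace ℝ (Fin p)) : Prop :=
  TendstoInProb P θhat θstar ∧
  ∃ S : Matrix (Fin p) (Fin p) ℝ, S.IsSymm ∧ S.PosDef ∧
    ∀ f : EuclideanSpace ℝ (Fin p) → ℝ, Continuous f → (∃ C, ∀ x, |f x| ≤ C) →
      Tendsto (fun n => ∫ ω, f ((Real.sqrt n) • (θhat n ω - θstar)) ∂ P n) atTop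
        (nhds (∫ x, f x * gaussDensity p 0 S x))

/-- Assumption (A1): the prior is continuous and positive near `θstar`. -/
def A1 {p : ℕ} (prior : EuclideanSpace ℝ (Fin p) → ℝ)
    (θstar : EuclideanSpace ℝ (Fin p)) : Prop :=
  ∃ δ : ℝ, 0 < δ ∧ ContinuousOn prior (Metric.ball θstar δ) ∧
    ∀ θ ∈ Metric.ball θstar δ, 0 < prior θ

/-- Assumption (A2): tempered local asymptotic normality with matrix `V`. -/
def A2 {p : ℕ} {Ω : ℕ → Type} [∀ n, MeasurableSpace (Ω n)] (P : ∀ n, Measure (Ω n))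
    (L : ∀ n, Ω n → EuclideanSpace ℝ (Fin p) → ℝ)
    (θhat : ∀ n, Ω n → EuclideanSpace ℝ (Fin p)) (θstar : EuclideanSpace ℝ (Fin p))
    (α : ℕ → ℝ) (V : Matrix (Fin p) (Fin p) ℝ) : Prop :=
  V.IsSymm ∧ V.PosDef ∧
  ∀ r : ℝ, 0 < r → ∀ ε : ℝ, 0 < ε →
    Tendsto (fun n => P n {ω | ∃ h : EuclideanSpace ℝ (Fin p), ‖h‖ ≤ r ∧
      ε < |α n * (Real.log (L n ω (θstar + (Real.sqrt (α n * (n : ℝ)))⁻¹ • h)) -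
              Real.log (L n ω θstar))
            - Real.sqrt (α n) *
                ∑ i, ∑ j, h i * V i j * (Real.sqrt n * (θhat n ω j - θstar j))
            + (1 / 2) * ∑ i, ∑ j, h i * V i j * h j|}) atTop (nhds 0)

/-- Assumption (A3): all rescaled posterior moments are bounded in probability. -/
def A3 {p : ℕ} {Ω : ℕ → Type} [∀ n, MeasurableSpace (Ω n)] (P : ∀ n, Measure (Ω n))
    (L : ∀ n, Ω n → EuclideanSpace ℝ (Fin p) → ℝ)
    (prior : EuclideanSpace ℝ (Fin p) → ℝ) (θstar : EuclideanSpace ℝ (Fin p))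
    (α : ℕ → ℝ) : Prop :=
  ∀ ε : ℝ, 0 < ε → ∀ k₀ : ℝ, 0 ≤ k₀ → ∃ M : ℝ, ∃ N : ℕ, ∀ n : ℕ,
    (N : ℝ) ≤ α n * n →
    P n {ω | M < ∫ θ, ‖Real.sqrt (α n * (n : ℝ)) • (θ - θstar)‖ ^ k₀ *
        post (L n) prior (α n) ω θ} < ENNReal.ofReal ε

/-- Conditions 1 and 2 (with a common radius `r`): salience of the pseudo-true parameter
and local quadratic behavior of the log-likelihood near the MLE. -/
def Conds12 {p : ℕ} {Ω : ℕ → Type} [∀ n, MeasurableSpace (Ω n)] (P : ∀ n, Measure (Ω n))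
    (L : ∀ n, Ω n → EuclideanSpace ℝ (Fin p) → ℝ)
    (θhat : ∀ n, Ω n → EuclideanSpace ℝ (Fin p))
    (θstar : EuclideanSpace ℝ (Fin p)) : Prop :=
  ∃ Lc c₀ c₁ c₂ r : ℝ, ∃ γfun : ℝ → ℝ,
    0 < Lc ∧ 0 < c₀ ∧ 0 < c₁ ∧ 0 ≤ c₂ ∧ Real.exp (c₂ / c₀) / c₁ < r ∧
    (∀ v : ℝ, 0 ≤ v → 0 ≤ γfun v) ∧
    (∀ v : ℝ, r ≤ v → c₀ * Real.log (1 + c₁ * v) - c₂ ≤ γfun v) ∧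
    Tendsto (fun n => P n {ω | ∀ θ, r ≤ ‖θ - θstar‖ →
        Real.log (L n ω θ) - Real.log (L n ω θstar) ≤
          -(Lc * (n : ℝ) * γfun ‖θ - θstar‖)}) atTop (nhds 1) ∧
    ∃ c₃ c₄ : ℝ, 0 < c₃ ∧ 0 < c₄ ∧
      Tendsto (fun n => P n {ω | ∀ θ, ‖θ - θhat n ω‖ < 2 * r →
          -((n : ℝ) * c₃ * ‖θ - θhat n ω‖ ^ 2) ≤
              Real.log (L n ω θ) - Real.log (L n ω (θhat n ω)) ∧
            Real.log (L n ω θ) - Real.log (L n ω (θhat n ω)) ≤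
              -((n : ℝ) * c₄ * ‖θ - θhat n ω‖ ^ 2)}) atTop (nhds 1)


/-- Assumption (A1'): the prior is positive and C² near `θstar`, with finite mean. -/
def A1' {p : ℕ} (prior : EuclideanSpace ℝ (Fin p) → ℝ)
    (θstar : EuclideanSpace ℝ (Fin p)) : Prop :=
  (∃ δ : ℝ, 0 < δ ∧ (∀ θ ∈ Metric.ball θstar δ, 0 < prior θ) ∧
    ContDiffOn ℝ 2 prior (Metric.ball θstar δ)) ∧
  Integrable (fun θ : EuclideanSpace ℝ (Fin p) => ‖θ‖ * prior θ)

/-- Assumption (A2'): higher-order tempered LAN centered at the MLE, with data `H` and `S`. -/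
def A2' {p : ℕ} {Ω : ℕ → Type} [∀ n, MeasurableSpace (Ω n)] (P : ∀ n, Measure (Ω n))
    (L : ∀ n, Ω n → EuclideanSpace ℝ (Fin p) → ℝ)
    (θhat : ∀ n, Ω n → EuclideanSpace ℝ (Fin p)) (α : ℕ → ℝ)
    (H : ∀ n, Ω n → Matrix (Fin p) (Fin p) ℝ)
    (S : ∀ n, Ω n → Fin p → Fin p → Fin p → ℝ) : Prop :=
  Tendsto (fun n => P n {ω | (H n ω).IsSymm ∧ (H n ω).PosDef}) atTop (nhds 1) ∧
  ∃ M : ℝ, ∃ δ : ℝ, 0 < δ ∧ ∀ ε : ℝ, 0 < ε → ∃ N : ℕ, ∀ n ≥ N,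
    P n {ω | ∃ h : EuclideanSpace ℝ (Fin p), ‖h‖ ≤ δ * Real.sqrt (α n * (n : ℝ)) ∧
      (M / (α n * (n : ℝ))) * ‖h‖ ^ 4 <
        α n * (Real.log (L n ω (θhat n ω + (Real.sqrt (α n * (n : ℝ)))⁻¹ • h)) -
            Real.log (L n ω (θhat n ω)))
          + (1 / 2) * ∑ i, ∑ j, h i * H n ω i j * h j
          - (6 * Real.sqrt (α n * (n : ℝ)))⁻¹ *
              ∑ i, ∑ j, ∑ k, S n ω i j k * h i * h j * h k} < ENNReal.ofReal ε

/-- Assumption (A3'): salience of the MLE. -/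
def A3' {p : ℕ} {Ω : ℕ → Type} [∀ n, MeasurableSpace (Ω n)] (P : ∀ n, Measure (Ω n))
    (L : ∀ n, Ω n → EuclideanSpace ℝ (Fin p) → ℝ)
    (θhat : ∀ n, Ω n → EuclideanSpace ℝ (Fin p)) : Prop :=
  ∀ ε : ℝ, 0 < ε → ∀ δ' : ℝ, 0 < δ' → ∃ c : ℝ, 0 < c ∧ ∃ N : ℕ, ∀ n ≥ N,
    P n {ω | ∃ θ, δ' ≤ ‖θ - θhat n ω‖ ∧
      -c < (n : ℝ)⁻¹ * (Real.log (L n ω θ) - Real.log (L n ω (θhat n ω)))}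
      < ENNReal.ofReal ε

/-- Condition (ALap) for the function `b` in the Laplace approximation. -/
def ALap {p : ℕ} {Ω : ℕ → Type} [∀ n, MeasurableSpace (Ω n)] (P : ∀ n, Measure (Ω n))
    (θhat : ∀ n, Ω n → EuclideanSpace ℝ (Fin p)) (θstar : EuclideanSpace ℝ (Fin p))
    (α : ℕ → ℝ) (b : EuclideanSpace ℝ (Fin p) → ℝ) : Prop :=
  Integrable b ∧
  (∃ δ : ℝ, 0 < δ ∧ ∃ C : ℝ, ∀ θ ∈ Metric.ball θstar δ, |b θ| ≤ C) ∧
  ∃ v : ∀ n, Ω n → EuclideanSpace ℝ (Fin p), ∃ M : ℝ, ∃ δ : ℝ, 0 < δ ∧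
    ∀ ε : ℝ, 0 < ε → ∃ N : ℕ, ∀ n ≥ N,
      P n {ω | ∃ h : EuclideanSpace ℝ (Fin p), ‖h‖ ≤ δ * Real.sqrt (α n * (n : ℝ)) ∧
        (∑ i, v n ω i * h i) / Real.sqrt (α n * (n : ℝ)) + (M / (α n * (n : ℝ))) * ‖h‖ ^ 2 <
          b (θhat n ω + (Real.sqrt (α n * (n : ℝ)))⁻¹ • h) - b (θhat n ω)}
        < ENNReal.ofReal ε

/-- The posterior mean as a vector in Euclidean space. -/
def postMean {p : ℕ} {Ω : Type} (L : Ω → EuclideanSpace ℝ (Fin p) → ℝ)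
    (prior : EuclideanSpace ℝ (Fin p) → ℝ) (α : ℝ) (ω : Ω) :
    EuclideanSpace ℝ (Fin p) :=
  (WithLp.equiv 2 (Fin p → ℝ)).symm (fun j => ∫ θ, θ j * post L prior α ω θ)

/-- A coupling of two measures. -/
def IsCoupling {X : Type} [MeasurableSpace X] (μ ν : Measure X)
    (γ : Measure (X × X)) : Prop :=
  IsProbabilityMeasure γ ∧ γ.map Prod.fst = μ ∧ γ.map Prod.snd = ν

/-- The `s`-Wasserstein distance. -/
def wassersteinDist {X : Type} [MeasurableSpace X] [PseudoMetricSpace X]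
    (s : ℝ) (μ ν : Measure X) : ℝ :=
  sInf {c : ℝ | ∃ γ : Measure (X × X), IsCoupling μ ν γ ∧
    c = (∫ x : X × X, dist x.1 x.2 ^ s ∂γ) ^ (1 / s)}

/-- The total variation distance between two measures. -/
def tvDist {X : Type} [MeasurableSpace X] (μ ν : Measure X) : ℝ :=
  sSup {x : ℝ | ∃ A : Set X, MeasurableSet A ∧ x = |(μ A).toReal - (ν A).toReal|}

/-- Standard basis vector of Euclidean space. -/
def basisE (p : ℕ) (i : Fin p) : EuclideanSpace ℝ (Fin p) :=
  EuclideanSpace.single i (1 : ℝ)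

/-- First directional partial derivative. -/
def d1 {p : ℕ} (g : EuclideanSpace ℝ (Fin p) → ℝ) (θ : EuclideanSpace ℝ (Fin p))
    (i : Fin p) : ℝ :=
  fderiv ℝ g θ (basisE p i)

/-- Second-order partial derivative. -/
def d2 {p : ℕ} (g : EuclideanSpace ℝ (Fin p) → ℝ) (θ : EuclideanSpace ℝ (Fin p))
    (i j : Fin p) : ℝ :=
  fderiv ℝ (fun θ' => d1 g θ' j) θ (basisE p i)

/-- Third-order partial derivative. -/
def d3 {p : ℕ} (g : EuclideanSpace ℝ (Fin p) → ℝ) (θ : EuclideanSpace ℝ (Fin p))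
    (i j k : Fin p) : ℝ :=
  fderiv ℝ (fun θ' => d2 g θ' j k) θ (basisE p i)

/-- Fourth-order partial derivative. -/
def d4 {p : ℕ} (g : EuclideanSpace ℝ (Fin p) → ℝ) (θ : EuclideanSpace ℝ (Fin p))
    (i j k l : Fin p) : ℝ :=
  fderiv ℝ (fun θ' => d3 g θ' j k l) θ (basisE p i)

/-!
Split `μ = ρ + ξ₁`, `ν = ρ + ξ₂` with `ρ` the common part given by a Hahn decomposition; the
remainders have the same mass `e ≤ d_TV(μ, ν)`. Keeping `ρ` on the diagonal and coupling `ξ₁`, `ξ₂`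
independently (normalised by `e`) costs at most `2^(s-1) (∫ d(·,x₀)^s dξ₁ + ∫ d(·,x₀)^s dξ₂)`, and
by Hölder each term is at most `M^(s/m) e^(1-s/m)` when the `m`-th moments are at most `M`. So
`W_s ≤ (2^s M^(s/m) δ^(1-s/m))^(1/s)` as soon as `d_TV ≤ δ`; the moment bound holds outside an event
of small probability, and `δ` can be taken small enough to push this bound below any `t > 0`.
-/

open scoped ENNReal

section TotalVariation

variable {X : Type} [MeasurableSpace X]

lemma abs_sub_le_tvDist (μ ν : Measure X) [IsFiniteMeasure μ] [IsFiniteMeasure ν]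
    {A : Set X} (hA : MeasurableSet A) :
    |(μ A).toReal - (ν A).toReal| ≤ tvDist μ ν := by
  refine le_csSup ⟨μ.real Set.univ + ν.real Set.univ, ?_⟩ ⟨A, hA, rfl⟩
  rintro _ ⟨B, -, rfl⟩
  have hμB : μ.real B ≤ μ.real Set.univ := measureReal_mono (Set.subset_univ B)
  have hνB : ν.real B ≤ ν.real Set.univ := measureReal_mono (Set.subset_univ B)
  rw [← measureReal_def, ← measureReal_def, abs_sub_le_iff]
  constructor <;>
    linarith [measureReal_nonneg (μ := μ) (s := B), measureReal_nonneg (μ := ν) (s := B)]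

lemma exists_common_part_mass_le_tvDist (μ ν : Measure X) [IsProbabilityMeasure μ]
    [IsProbabilityMeasure ν] :
    ∃ ρ ξ₁ ξ₂ : Measure X, μ = ρ + ξ₁ ∧ ν = ρ + ξ₂ ∧ ξ₁ Set.univ = ξ₂ Set.univ ∧
      ξ₁ Set.univ ≤ ENNReal.ofReal (tvDist μ ν) := by
  obtain ⟨E, hE, hνμ, hμν⟩ := hahn_decomposition μ ν
  have hE₁ : ν.restrict E ≤ μ.restrict E := Measure.le_iff.2 fun A hA => by
    simpa only [Measure.restrict_apply hA] using hνμ _ (hA.inter hE) Set.inter_subset_right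
  have hE₂ : μ.restrict Eᶜ ≤ ν.restrict Eᶜ := Measure.le_iff.2 fun A hA => by
    simpa only [Measure.restrict_apply hA] using hμν _ (hA.inter hE.compl) Set.inter_subset_right
  set ρ := ν.restrict E + μ.restrict Eᶜ
  have hμ : μ = ρ + (μ.restrict E - ν.restrict E) := by
    rw [add_comm, ← add_assoc, Measure.sub_add_cancel_of_le hE₁,
      Measure.restrict_add_restrict_compl hE]
  have hν : ν = ρ + (ν.restrict Eᶜ - μ.restrict Eᶜ) := by
    rw [add_comm, show ρ = μ.restrict Eᶜ + ν.restrict E from add_comm _ _, ← add_assoc,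
      Measure.sub_add_cancel_of_le hE₂, add_comm, Measure.restrict_add_restrict_compl hE]
  refine ⟨ρ, _, _, hμ, hν, ?_, ?_⟩
  · have hρ : ρ Set.univ ≠ ∞ :=
      ne_top_of_le_ne_top (measure_ne_top μ Set.univ) (hμ ▸ Measure.le_add_right le_rfl _)
    rw [← ENNReal.add_right_inj hρ, ← Measure.add_apply, ← Measure.add_apply, ← hμ, ← hν,
      measure_univ, measure_univ]
  · rw [Measure.sub_apply MeasurableSet.univ hE₁, Measure.restrict_apply_univ,
      Measure.restrict_apply_univ, ← ENNReal.ofReal_toReal (measure_ne_top μ E),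
      ← ENNReal.ofReal_toReal (measure_ne_top ν E), ← ENNReal.ofReal_sub _ ENNReal.toReal_nonneg]
    exact ENNReal.ofReal_le_ofReal ((le_abs_self _).trans (abs_sub_le_tvDist μ ν hE))

end TotalVariation

section Coupling

variable {X : Type} [MeasurableSpace X]

lemma inv_measure_univ_smul_measure_univ_smul (ξ : Measure X) [IsFiniteMeasure ξ] :
    (ξ Set.univ)⁻¹ • ξ Set.univ • ξ = ξ := by
  rcases eq_zero_or_neZero ξ with rfl | _
  · simp
  · rw [smul_smul, ENNReal.inv_mul_cancel (NeZero.ne _) (measure_ne_top ξ _), one_smul]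

def commonPartCoupling (ρ ξ₁ ξ₂ : Measure X) : Measure (X × X) :=
  ρ.map (fun x => (x, x)) + (ξ₁ Set.univ)⁻¹ • ξ₁.prod ξ₂

lemma isCoupling_commonPartCoupling {μ ν ρ ξ₁ ξ₂ : Measure X} [IsProbabilityMeasure μ]
    [IsFiniteMeasure ξ₁] [IsFiniteMeasure ξ₂] (hμ : μ = ρ + ξ₁) (hν : ν = ρ + ξ₂)
    (hξ : ξ₁ Set.univ = ξ₂ Set.univ) :
    IsCoupling μ ν (commonPartCoupling ρ ξ₁ ξ₂) := by
  have hdiag : Measurable fun x : X => (x, x) := measurable_id.prodMk measurable_id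
  have hfst : (commonPartCoupling ρ ξ₁ ξ₂).map Prod.fst = μ := by
    rw [commonPartCoupling, Measure.map_add _ _ measurable_fst,
      Measure.map_map measurable_fst hdiag, Measure.map_smul, Measure.map_fst_prod, ← hξ,
      inv_measure_univ_smul_measure_univ_smul, hμ]
    simp only [Function.comp_def, Measure.map_id']
  have hsnd : (commonPartCoupling ρ ξ₁ ξ₂).map Prod.snd = ν := by
    rw [commonPartCoupling, Measure.map_add _ _ measurable_snd,
      Measure.map_map measurable_snd hdiag, Measure.map_smul, Measure.map_snd_prod, hξ,
      inv_measure_univ_smul_measure_univ_smul, hν]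
    simp only [Function.comp_def, Measure.map_id']
  refine ⟨⟨?_⟩, hfst, hsnd⟩
  rw [← Set.preimage_univ (f := Prod.fst), ← Measure.map_apply measurable_fst MeasurableSet.univ,
    hfst, measure_univ]

variable [PseudoEMetricSpace X] [OpensMeasurableSpace X]

lemma lintegral_edist_rpow_prod_le (ξ₁ ξ₂ : Measure X) [SFinite ξ₁] [SFinite ξ₂] {s : ℝ}
    (hs : 1 ≤ s) (x₀ : X) :
    ∫⁻ z, edist z.1 z.2 ^ s ∂ξ₁.prod ξ₂ ≤
      2 ^ (s - 1) * (ξ₂ Set.univ * ∫⁻ x, edist x x₀ ^ s ∂ξ₁ +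
        ξ₁ Set.univ * ∫⁻ y, edist y x₀ ^ s ∂ξ₂) := by
  have hmeas₁ : Measurable fun z : X × X => edist z.1 x₀ ^ s := by fun_prop
  have hmeas₂ : Measurable fun z : X × X => edist z.2 x₀ ^ s := by fun_prop
  calc ∫⁻ z, edist z.1 z.2 ^ s ∂ξ₁.prod ξ₂
      ≤ ∫⁻ z, 2 ^ (s - 1) * (edist z.1 x₀ ^ s + edist z.2 x₀ ^ s) ∂ξ₁.prod ξ₂ :=
        lintegral_mono fun z => (ENNReal.rpow_le_rpow (edist_triangle_right _ _ _)
          (by linarith)).trans (ENNReal.rpow_add_le_mul_rpow_add_rpow _ _ hs)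
    _ = _ := by
        rw [lintegral_const_mul _ (by fun_prop), lintegral_add_left hmeas₁,
          lintegral_prod _ hmeas₁.aemeasurable, lintegral_prod_symm _ hmeas₂.aemeasurable]
        simp only [lintegral_const, lintegral_mul_const _ (measurable_edist_left.pow_const s)]
        ring

lemma lintegral_edist_rpow_commonPartCoupling [SecondCountableTopology X]
    (ρ ξ₁ ξ₂ : Measure X) {s : ℝ} (hs : 0 < s) :
    ∫⁻ z, edist z.1 z.2 ^ s ∂commonPartCoupling ρ ξ₁ ξ₂ =
      (ξ₁ Set.univ)⁻¹ * ∫⁻ z, edist z.1 z.2 ^ s ∂ξ₁.prod ξ₂ := by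
  have hdiag : Measurable fun x : X => (x, x) := measurable_id.prodMk measurable_id
  rw [commonPartCoupling, lintegral_add_measure, lintegral_smul_measure,
    lintegral_map (measurable_edist.pow_const s) hdiag]
  simp [ENNReal.zero_rpow_of_pos hs]

end Coupling

lemma lintegral_rpow_le_lintegral_rpow_mul_measure_univ {X : Type} [MeasurableSpace X]
    (ξ : Measure X) {f : X → ℝ≥0∞} (hf : AEMeasurable f ξ) {p q : ℝ} (hp : 0 < p)
    (hpq : p < q) :
    ∫⁻ x, f x ^ p ∂ξ ≤ (∫⁻ x, f x ^ q ∂ξ) ^ (p / q) * ξ Set.univ ^ (1 - p / q) := by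
  have hconj : (q / p).HolderConjugate (1 - p / q)⁻¹ := by
    rw [Real.holderConjugate_iff, inv_inv, inv_div]
    exact ⟨(one_lt_div hp).2 hpq, by ring⟩
  have hHolder := ENNReal.lintegral_mul_le_Lp_mul_Lq ξ hconj (hf.pow_const p) aemeasurable_const
    (g := fun _ => 1)
  have hpow : ∀ x, (f x ^ p) ^ (q / p) = f x ^ q := fun x => by
    rw [← ENNReal.rpow_mul, mul_div_cancel₀ _ hp.ne']
  simpa only [Pi.mul_apply, mul_one, ENNReal.one_rpow, lintegral_const, one_mul, hpow,
    one_div, inv_div, inv_inv] using hHolder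

lemma ofReal_dist_rpow {X : Type} [PseudoMetricSpace X] (x y : X) {p : ℝ} (hp : 0 ≤ p) :
    ENNReal.ofReal (dist x y ^ p) = edist x y ^ p := by
  rw [edist_dist, ENNReal.ofReal_rpow_of_nonneg dist_nonneg hp]

section Wasserstein

variable {X : Type} [MeasurableSpace X]

theorem exists_isCoupling_lintegral_edist_rpow_le [PseudoEMetricSpace X] [OpensMeasurableSpace X]
    [SecondCountableTopology X] {s m : ℝ} (hs : 1 ≤ s) (hm : s < m) (x₀ : X)
    (μ ν : Measure X) [IsProbabilityMeasure μ] [IsProbabilityMeasure ν] {M : ℝ≥0∞}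
    (hμ : ∫⁻ x, edist x x₀ ^ m ∂μ ≤ M) (hν : ∫⁻ y, edist y x₀ ^ m ∂ν ≤ M) :
    ∃ γ, IsCoupling μ ν γ ∧ ∫⁻ z, edist z.1 z.2 ^ s ∂γ ≤
      2 ^ s * M ^ (s / m) * ENNReal.ofReal (tvDist μ ν) ^ (1 - s / m) := by
  have hs₀ : 0 < s := by linarith
  have hsm : 0 ≤ 1 - s / m := by rw [sub_nonneg, div_le_one (hs₀.trans hm)]; exact hm.le
  obtain ⟨ρ, ξ₁, ξ₂, hμρ, hνρ, hξ, hmass⟩ := exists_common_part_mass_le_tvDist μ ν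
  have hξ₁ : ξ₁ ≤ μ := hμρ ▸ Measure.le_add_left le_rfl
  have hξ₂ : ξ₂ ≤ ν := hνρ ▸ Measure.le_add_left le_rfl
  have : IsFiniteMeasure ξ₁ := isFiniteMeasure_of_le μ hξ₁
  have : IsFiniteMeasure ξ₂ := isFiniteMeasure_of_le ν hξ₂
  set K := M ^ (s / m) * ENNReal.ofReal (tvDist μ ν) ^ (1 - s / m)
  have hmoment : ∀ (ξ η : Measure X), ξ ≤ η → ∫⁻ x, edist x x₀ ^ m ∂η ≤ M →
      ξ Set.univ ≤ ENNReal.ofReal (tvDist μ ν) → ∫⁻ x, edist x x₀ ^ s ∂ξ ≤ K :=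
    fun ξ η hξη hη hξ => (lintegral_rpow_le_lintegral_rpow_mul_measure_univ ξ
      measurable_edist_left.aemeasurable hs₀ hm).trans
        (mul_le_mul' (ENNReal.rpow_le_rpow ((lintegral_mono' hξη le_rfl).trans hη)
          (div_nonneg hs₀.le (hs₀.trans hm).le)) (ENNReal.rpow_le_rpow hξ hsm))
  refine ⟨_, isCoupling_commonPartCoupling hμρ hνρ hξ, ?_⟩
  calc ∫⁻ z, edist z.1 z.2 ^ s ∂commonPartCoupling ρ ξ₁ ξ₂
      = (ξ₁ Set.univ)⁻¹ * ∫⁻ z, edist z.1 z.2 ^ s ∂ξ₁.prod ξ₂ :=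
        lintegral_edist_rpow_commonPartCoupling ρ ξ₁ ξ₂ hs₀
    _ ≤ (ξ₁ Set.univ)⁻¹ * (2 ^ (s - 1) * (ξ₁ Set.univ * ∫⁻ x, edist x x₀ ^ s ∂ξ₁ +
          ξ₁ Set.univ * ∫⁻ y, edist y x₀ ^ s ∂ξ₂)) := by
        gcongr
        simpa only [hξ] using lintegral_edist_rpow_prod_le ξ₁ ξ₂ hs x₀
    _ = ((ξ₁ Set.univ)⁻¹ * ξ₁ Set.univ) * (2 ^ (s - 1) * (∫⁻ x, edist x x₀ ^ s ∂ξ₁ +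
          ∫⁻ y, edist y x₀ ^ s ∂ξ₂)) := by ring
    _ ≤ 1 * (2 ^ (s - 1) * (K + K)) := by
        gcongr
        · exact ENNReal.inv_mul_le_one _
        · exact hmoment ξ₁ μ hξ₁ hμ hmass
        · exact hmoment ξ₂ ν hξ₂ hν (hξ ▸ hmass)
    _ = 2 ^ s * M ^ (s / m) * ENNReal.ofReal (tvDist μ ν) ^ (1 - s / m) := by
        have htwo : (2 : ℝ≥0∞) ^ s = 2 ^ (s - 1) * 2 := by
          simpa using ENNReal.rpow_add (s - 1) 1 two_ne_zero ENNReal.ofNat_ne_top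
        rw [htwo]
        ring

variable [PseudoMetricSpace X] [OpensMeasurableSpace X] [SecondCountableTopology X]

lemma wassersteinDist_le_of_lintegral_le {s : ℝ} (hs : 0 ≤ s) {μ ν : Measure X}
    {γ : Measure (X × X)} (hγ : IsCoupling μ ν γ) {C : ℝ} (hC : 0 ≤ C)
    (h : ∫⁻ z, edist z.1 z.2 ^ s ∂γ ≤ ENNReal.ofReal C) :
    wassersteinDist s μ ν ≤ C ^ (1 / s) := by
  have hcost : ∫ z, dist z.1 z.2 ^ s ∂γ ≤ C := by
    rw [integral_eq_lintegral_of_nonneg_ae (Eventually.of_forall fun z => by positivity)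
      (continuous_dist.rpow_const fun _ => Or.inr hs).measurable.aestronglyMeasurable]
    simp only [ofReal_dist_rpow _ _ hs]
    exact ENNReal.toReal_le_of_le_ofReal hC h
  refine le_trans (csInf_le ⟨0, ?_⟩ ⟨γ, hγ, rfl⟩)
    (Real.rpow_le_rpow (integral_nonneg fun z => by positivity) hcost (by positivity))
  rintro _ ⟨γ', -, rfl⟩
  exact Real.rpow_nonneg (integral_nonneg fun z => by positivity) _

theorem wassersteinDist_le_of_tvDist_le {s m : ℝ} (hs : 1 ≤ s) (hm : s < m) (x₀ : X)
    {M δ : ℝ} (hM : 0 ≤ M) (hδ : 0 ≤ δ) (μ ν : Measure X) [IsProbabilityMeasure μ]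
    [IsProbabilityMeasure ν]
    (hmom : (∫⁻ x, ENNReal.ofReal (dist x x₀ ^ m) ∂μ) +
      ∫⁻ y, ENNReal.ofReal (dist y x₀ ^ m) ∂ν ≤ ENNReal.ofReal M)
    (htv : tvDist μ ν ≤ δ) :
    wassersteinDist s μ ν ≤ (2 ^ s * M ^ (s / m) * δ ^ (1 - s / m)) ^ (1 / s) := by
  have hs₀ : 0 < s := by linarith
  have hm₀ : 0 < m := hs₀.trans hm
  have hsm : 0 ≤ 1 - s / m := by rw [sub_nonneg, div_le_one hm₀]; exact hm.le
  simp only [ofReal_dist_rpow _ _ hm₀.le] at hmom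
  obtain ⟨γ, hγ, hcost⟩ := exists_isCoupling_lintegral_edist_rpow_le hs hm x₀ μ ν
    (le_self_add.trans hmom) (le_add_self.trans hmom)
  refine wassersteinDist_le_of_lintegral_le hs₀.le hγ (by positivity) (hcost.trans ?_)
  rw [ENNReal.ofReal_mul (by positivity), ENNReal.ofReal_mul (by positivity),
    ← ENNReal.ofReal_rpow_of_nonneg hM (by positivity), ← ENNReal.ofReal_rpow_of_nonneg hδ hsm,
    ← ENNReal.ofReal_rpow_of_pos two_pos, ENNReal.ofReal_ofNat]
  gcongr

end Wasserstein

lemma exists_pos_mul_rpow_rpow_lt (C : ℝ) {a b t : ℝ} (ha : 0 < a) (hb : 0 < b) (ht : 0 < t) :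
    ∃ δ : ℝ, 0 < δ ∧ (C * δ ^ a) ^ b < t := by
  have hlim : Tendsto (fun δ : ℝ => (C * δ ^ a) ^ b) (nhds 0) (nhds 0) := by
    simpa [Real.zero_rpow ha.ne', Real.zero_rpow hb.ne'] using
      (((tendsto_id (x := nhds (0 : ℝ))).rpow_const (Or.inr ha.le)).const_mul C).rpow_const
        (Or.inr hb.le)
  exact ((eventually_mem_nhdsWithin (s := Set.Ioi 0)).and
    ((hlim.mono_left nhdsWithin_le_nhds).eventually (gt_mem_nhds ht))).exists

theorem wasserstein_convergence_from_tv_and_moments_general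
    {X : Type} [MetricSpace X] [PolishSpace X] [MeasurableSpace X] [BorelSpace X]
    (s m : ℝ) (hs : 1 ≤ s) (hm : s < m) (x₀ : X)
    {Ω : ℕ → Type} [∀ n, MeasurableSpace (Ω n)]
    (P : ∀ n, Measure (Ω n))
    (μhat νhat : ∀ n, Ω n → Measure X)
    (hμprob : ∀ n ω, IsProbabilityMeasure (μhat n ω))
    (hνprob : ∀ n ω, IsProbabilityMeasure (νhat n ω))
    -- total variation distance tends to 0 in probability
    (htv : ∀ t : ℝ, 0 < t →
      Tendsto (fun n => P n {ω | t < tvDist (μhat n ω) (νhat n ω)}) atTop (nhds 0))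
    -- the `m`-th moments `M_m(μ̂ n, ν̂ n)` are bounded in probability
    (hmom : ∀ ε : ℝ, 0 < ε → ∃ M : ℝ, 0 < M ∧ ∃ N : ℕ, ∀ n ≥ N,
      P n {ω | ENNReal.ofReal M <
          (∫⁻ x, ENNReal.ofReal (dist x x₀ ^ m) ∂ μhat n ω) +
            ∫⁻ y, ENNReal.ofReal (dist y x₀ ^ m) ∂ νhat n ω} < ENNReal.ofReal ε) :
    ∀ t : ℝ, 0 < t →
      Tendsto (fun n => P n {ω | t < wassersteinDist s (μhat n ω) (νhat n ω)})
        atTop (nhds 0) := by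
  intro t ht
  have hs₀ : 0 < s := by linarith
  have hm₀ : 0 < m := hs₀.trans hm
  refine ENNReal.tendsto_nhds_zero.2 fun ε hε => ?_
  obtain ⟨ε', -, hε'₀, hε'⟩ := ENNReal.lt_iff_exists_real_btwn.1 (ENNReal.half_pos hε.ne')
  obtain ⟨M, hM, N, hN⟩ := hmom ε' (ENNReal.ofReal_pos.1 hε'₀)
  obtain ⟨δ, hδ, hδt⟩ := exists_pos_mul_rpow_rpow_lt (2 ^ s * M ^ (s / m))
    (by rw [sub_pos, div_lt_one hm₀]; exact hm) (by positivity : 0 < 1 / s) ht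
  have hsub : ∀ n, {ω | t < wassersteinDist s (μhat n ω) (νhat n ω)} ⊆
      {ω | δ < tvDist (μhat n ω) (νhat n ω)} ∪
        {ω | ENNReal.ofReal M < (∫⁻ x, ENNReal.ofReal (dist x x₀ ^ m) ∂ μhat n ω) +
          ∫⁻ y, ENNReal.ofReal (dist y x₀ ^ m) ∂ νhat n ω} := by
    intro n ω hω
    by_contra hω'
    simp only [Set.mem_union, Set.mem_ofPred_eq, not_or, not_lt] at hω'
    have := hμprob n ω
    have := hνprob n ω
    exact hω.not_ge ((wassersteinDist_le_of_tvDist_le hs hm x₀ hM.le hδ.le _ _ hω'.2 hω'.1).trans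
      hδt.le)
  filter_upwards [ENNReal.tendsto_nhds_zero.1 (htv δ hδ) (ε / 2) (ENNReal.half_pos hε.ne'),
    eventually_ge_atTop N] with n htvn hn
  calc P n {ω | t < wassersteinDist s (μhat n ω) (νhat n ω)}
      ≤ _ := (measure_mono (hsub n)).trans (measure_union_le _ _)
    _ ≤ ε / 2 + ε / 2 := add_le_add htvn ((hN n hn).trans hε').le
    _ = ε := ENNReal.add_halves ε

/-- **Corollary C.1** (Wasserstein convergence in probability from total-variation
convergence plus bounded moments). -/
theorem wasserstein_convergence_from_tv_and_moments
    {X : Type} [MetricSpace X] [PolishSpace X] [MeasurableSpace X] [BorelSpace X]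
    (s m : ℝ) (hs : 1 ≤ s) (hm : s < m) (x₀ : X)
    {Ω : ℕ → Type} [∀ n, MeasurableSpace (Ω n)]
    (P : ∀ n, Measure (Ω n)) [∀ n, IsProbabilityMeasure (P n)]
    (μhat νhat : ∀ n, Ω n → Measure X)
    (hμprob : ∀ n ω, IsProbabilityMeasure (μhat n ω))
    (hνprob : ∀ n ω, IsProbabilityMeasure (νhat n ω))
    -- total variation distance tends to 0 in probability
    (htv : ∀ t : ℝ, 0 < t →
      Tendsto (fun n => P n {ω | t < tvDist (μhat n ω) (νhat n ω)}) atTop (nhds 0))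
    -- the `m`-th moments `M_m(μ̂ n, ν̂ n)` are bounded in probability
    (hmom : ∀ ε : ℝ, 0 < ε → ∃ M : ℝ, 0 < M ∧ ∃ N : ℕ, ∀ n ≥ N,
      P n {ω | ENNReal.ofReal M <
          (∫⁻ x, ENNReal.ofReal (dist x x₀ ^ m) ∂ μhat n ω) +
            ∫⁻ y, ENNReal.ofReal (dist y x₀ ^ m) ∂ νhat n ω} < ENNReal.ofReal ε) :
    ∀ t : ℝ, 0 < t →
      Tendsto (fun n => P n {ω | t < wassersteinDist s (μhat n ω) (νhat n ω)})
        atTop (nhds 0) :=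
  wasserstein_convergence_from_tv_and_moments_general s m hs hm x₀ P μhat νhat hμprob hνprob htv
    hmom
end
end

section
/- Proposition C.4 (fourth-order smoothness implies the higher-order tempered LAN condition, i.e., sufficient conditions for (A2')). Let (α_n) be a positive sequence with α_n → 0 and α_n·n → ∞, and assume (A0). Suppose there is γ > 0 such that, P_n-almost surely: (i) θ ↦ log f_n(X^n|θ) is four times continuously differentiable on the open ball B_{θ*}(γ) := {θ : ‖θ − θ*‖₂ < γ}; (ii) there are measurable M̃_n : Ω_n → [0,∞) with sup_n E_{P_n}[M̃_n/n] < ∞ such that |∂⁴ log f_n(X^n|θ)/∂θ_i ∂θ_j ∂θ_k ∂θ_l| < M̃_n for all indices i,j,k,l and all θ in the closure of B_{θ*}(γ); (iii) P_n( the matrix −(1/n)·∇² log f_n(X^n|θ) is positive definite for all θ ∈ B_{θ*}(γ) ) → 1. Then, with H_n := −(1/n)·∇² log f_n(X^n|θ̂) — which is symmetric and positive definite with P_n-probability tending to one — S_n := (1/n)·∇³ log f_n(X^n|θ̂), and R̃_n(h) := α_n·[log f_n(X^n|θ̂ + h/√(α_n n)) − log f_n(X^n|θ̂)] + (1/2)·hᵀH_n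 h − (1/(6√(α_n n)))·⟨S_n, h⊗h⊗h⟩, for every ε > 0 there is a constant M < ∞ (one may take M = (p²/(12ε))·sup_n E_{P_n}[M̃_n/n] + 1) such that for all n sufficiently large, P_n( sup_{‖h‖₂ ≤ (γ/2)·√(α_n n)} [ R̃_n(h) − (M/(α_n n))·‖h‖₂⁴ ] > 0 ) < ε; that is, the remainder bound in (A2') holds with δ = γ/2 and these H_n and S_n. -/
open MeasureTheory Filter BigOperators

noncomputable section

/-! On the event where the MLE `θ̂` lies within `γ / 4` of `θstar` (whose probability tends to
one by consistency), `g = log f_n(X^n | ·)` is `C⁴` on the ball and maximal at `θ̂`, so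
`∇g(θ̂) = 0`. A one-sided fourth-order Taylor bound along `t ↦ g(θ̂ + t u)` then gives
`g(θ̂ + u) - g(θ̂) ≤ ½ D²g(θ̂)[u,u] + ⅙ D³g(θ̂)[u,u,u] + M̃_n (∑ |u_i|)⁴ / 24`, and
`(∑ |u_i|)² ≤ p ‖u‖²`. For `u = h / √(α_n n)` this reads
`R̃_n(h) ≤ (M̃_n / n) p² ‖h‖⁴ / (24 α_n n)`, and by Markov's inequality `M̃_n / n` stays below a
constant outside an event of probability `ε / 2`. Symmetry of `H_n` is Schwarz's theorem; its
positive definiteness is (iii) at `θ̂`. -/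

def taylorBound (a : ℕ → ℝ) (B : ℝ) (n : ℕ) (t : ℝ) : ℝ :=
  ∑ k ∈ Finset.range n, a k * t ^ k / k.factorial + B * t ^ n / n.factorial

lemma hasDerivAt_pow_succ_div_factorial (k : ℕ) (t : ℝ) :
    HasDerivAt (fun s : ℝ => s ^ (k + 1) / (k + 1).factorial) (t ^ k / k.factorial) t := by
  refine ((hasDerivAt_pow (k + 1) t).div_const _).congr_deriv ?_
  rw [Nat.factorial_succ, Nat.cast_mul]
  field_simp
  push_cast
  ring

lemma hasDerivAt_taylorBound (a : ℕ → ℝ) (B : ℝ) (n : ℕ) (t : ℝ) :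
    HasDerivAt (taylorBound a B (n + 1)) (taylorBound (fun k => a (k + 1)) B n t) t := by
  have hsum := HasDerivAt.fun_sum (u := Finset.range n)
    fun k _ => (hasDerivAt_pow_succ_div_factorial k t).const_mul (a (k + 1))
  have hB := (hasDerivAt_pow_succ_div_factorial n t).const_mul B
  have heq : taylorBound a B (n + 1) = fun s => a 0 + ((∑ k ∈ Finset.range n,
      a (k + 1) * (s ^ (k + 1) / (k + 1).factorial)) + B * (s ^ (n + 1) / (n + 1).factorial)) := by
    ext s
    simp only [taylorBound, mul_div_assoc, Finset.sum_range_succ', pow_zero, Nat.factorial_zero,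
      Nat.cast_one, div_one, mul_one]
    ring
  rw [heq]
  exact ((hsum.add hB).const_add (a 0)).congr_deriv (by simp [taylorBound, mul_div_assoc])

lemma taylorBound_zero (a : ℕ → ℝ) (B : ℝ) (n : ℕ) :
    taylorBound a B (n + 1) 0 = a 0 := by
  simp [taylorBound, Finset.sum_range_succ']

lemma le_of_hasDerivAt_nonpos {f f' : ℝ → ℝ}
    (hf : ∀ t ∈ Set.Icc (0 : ℝ) 1, HasDerivAt f (f' t) t)
    (hf' : ∀ t ∈ Set.Icc (0 : ℝ) 1, f' t ≤ 0) {t : ℝ} (ht : t ∈ Set.Icc (0 : ℝ) 1) :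
    f t ≤ f 0 := by
  have hanti : AntitoneOn f (Set.Icc 0 1) := by
    refine antitoneOn_of_hasDerivWithinAt_nonpos (f' := f') (convex_Icc 0 1)
      (fun s hs => (hf s hs).continuousAt.continuousWithinAt) (fun s hs => ?_) fun s hs => ?_
    all_goals rw [interior_Icc] at hs
    exacts [(hf s (Set.Ioo_subset_Icc_self hs)).hasDerivWithinAt,
      hf' s (Set.Ioo_subset_Icc_self hs)]
  exact hanti (Set.left_mem_Icc.2 zero_le_one) ht ht.1

theorem le_taylorBound_of_hasDerivAt (n : ℕ) (ψ : ℕ → ℝ → ℝ) (B : ℝ)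
    (hψ : ∀ k < n, ∀ t ∈ Set.Icc (0 : ℝ) 1, HasDerivAt (ψ k) (ψ (k + 1) t) t)
    (hB : ∀ t ∈ Set.Icc (0 : ℝ) 1, ψ n t ≤ B) :
    ∀ t ∈ Set.Icc (0 : ℝ) 1, ψ 0 t ≤ taylorBound (fun k => ψ k 0) B n t := by
  induction n generalizing ψ with
  | zero => simpa [taylorBound] using hB
  | succ n ih =>
    intro t ht
    have hψ' := ih (fun k => ψ (k + 1)) (fun k hk => hψ (k + 1) (by omega)) hB
    have hdiff := le_of_hasDerivAt_nonpos
      (fun s hs => (hψ 0 n.succ_pos s hs).sub (hasDerivAt_taylorBound (fun k => ψ k 0) B n s))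
      (fun s hs => sub_nonpos.2 (hψ' s hs)) ht
    simpa [taylorBound_zero] using hdiff

lemma abs_sum_mul_le_sum_abs_mul {ι : Type*} [Fintype ι] (u f : ι → ℝ) {C : ℝ}
    (hf : ∀ i, |f i| ≤ C) : |∑ i, u i * f i| ≤ (∑ i, |u i|) * C :=
  calc |∑ i, u i * f i| ≤ ∑ i, |u i| * |f i| := by
        simpa only [abs_mul] using Finset.abs_sum_le_sum_abs (fun i => u i * f i) Finset.univ
    _ ≤ ∑ i, |u i| * C := by gcongr with i; exact hf i
    _ = (∑ i, |u i|) * C := (Finset.sum_mul _ _ _).symm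

lemma isLocalMax_log_of_lt {E : Type*} [TopologicalSpace E] {f : E → ℝ} {x : E}
    (hpos : ∀ θ, 0 < f θ) (hmax : ∀ θ, θ ≠ x → f θ < f x) :
    IsLocalMax (fun θ => Real.log (f θ)) x :=
  Filter.Eventually.of_forall fun θ => by
    rcases eq_or_ne θ x with rfl | hθ
    · exact le_rfl
    · exact Real.log_le_log (hpos θ) (hmax θ hθ).le

lemma add_inv_smul_mem_ball {E : Type*} [NormedAddCommGroup E] [NormedSpace ℝ E]
    {x y h : E} {r c : ℝ} (hr : 0 < r) (hc : 0 < c) (hx : ‖x - y‖ ≤ r / 4)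
    (hh : ‖h‖ ≤ r / 2 * c) : x + c⁻¹ • h ∈ Metric.ball y r := by
  have hch : ‖c⁻¹ • h‖ ≤ r / 2 := by
    rw [norm_smul, Real.norm_of_nonneg (inv_nonneg.2 hc.le), inv_mul_le_iff₀ hc]
    linarith
  rw [Metric.mem_ball, dist_eq_norm, add_sub_right_comm]
  linarith [norm_add_le (x - y) (c⁻¹ • h)]

section EuclideanTaylor

variable {p : ℕ}

lemma fderiv_apply_eq_sum_d1 (F : EuclideanSpace ℝ (Fin p) → ℝ) (θ u : EuclideanSpace ℝ (Fin p)) :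
    fderiv ℝ F θ u = ∑ i, u i * d1 F θ i := by
  conv_lhs => rw [← (EuclideanSpace.basisFun (Fin p) ℝ).sum_repr u]
  simp [d1, basisE]

lemma hasDerivAt_comp_add_smul {F : EuclideanSpace ℝ (Fin p) → ℝ} {x u : EuclideanSpace ℝ (Fin p)}
    {t : ℝ} (hF : DifferentiableAt ℝ F (x + t • u)) :
    HasDerivAt (fun s : ℝ => F (x + s • u)) (∑ i, u i * d1 F (x + t • u) i) t := by
  have hline : HasDerivAt (fun s : ℝ => x + s • u) u t := by
    simpa using ((hasDerivAt_id t).smul_const u).const_add x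
  rw [← fderiv_apply_eq_sum_d1]
  exact hF.hasFDerivAt.comp_hasDerivAt t hline

lemma contDiffOn_d1 {m n : WithTop ℕ∞} {g : EuclideanSpace ℝ (Fin p) → ℝ}
    {s : Set (EuclideanSpace ℝ (Fin p))} (hg : ContDiffOn ℝ n g s) (hs : IsOpen s)
    (hmn : m + 1 ≤ n) (i : Fin p) : ContDiffOn ℝ m (fun θ => d1 g θ i) s :=
  (hg.fderiv_of_isOpen hs hmn).clm_apply contDiffOn_const

lemma sum_abs_sq_le_card_mul_norm_sq (u : EuclideanSpace ℝ (Fin p)) :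
    (∑ i, |u i|) ^ 2 ≤ p * ‖u‖ ^ 2 := by
  simpa [EuclideanSpace.norm_sq_eq] using
    sq_sum_le_card_mul_sum_sq (s := Finset.univ) (f := fun i => |u i|)

def quadraticForm (D : Fin p → Fin p → ℝ) (v : EuclideanSpace ℝ (Fin p)) : ℝ :=
  ∑ i, ∑ j, D i j * v i * v j

def cubicForm (D : Fin p → Fin p → Fin p → ℝ) (v : EuclideanSpace ℝ (Fin p)) : ℝ :=
  ∑ i, ∑ j, ∑ k, D i j k * v i * v j * v k

lemma quadraticForm_smul (D : Fin p → Fin p → ℝ) (r : ℝ) (v : EuclideanSpace ℝ (Fin p)) :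
    quadraticForm D (r • v) = r ^ 2 * quadraticForm D v := by
  simp only [quadraticForm, PiLp.smul_apply, smul_eq_mul, Finset.mul_sum]
  exact Finset.sum_congr rfl fun i _ => Finset.sum_congr rfl fun j _ => by ring

lemma cubicForm_smul (D : Fin p → Fin p → Fin p → ℝ) (r : ℝ) (v : EuclideanSpace ℝ (Fin p)) :
    cubicForm D (r • v) = r ^ 3 * cubicForm D v := by
  simp only [cubicForm, PiLp.smul_apply, smul_eq_mul, Finset.mul_sum]
  exact Finset.sum_congr rfl fun i _ => Finset.sum_congr rfl fun j _ =>
    Finset.sum_congr rfl fun k _ => by ring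

lemma sum_mul_sum_mul_eq_quadraticForm (D : Fin p → Fin p → ℝ) (v : EuclideanSpace ℝ (Fin p)) :
    ∑ i, v i * ∑ j, v j * D j i = quadraticForm D v := by
  simp only [quadraticForm, Finset.mul_sum]
  rw [Finset.sum_comm]
  exact Finset.sum_congr rfl fun i _ => Finset.sum_congr rfl fun j _ => by ring

lemma sum_mul_sum_mul_sum_mul_eq_cubicForm (D : Fin p → Fin p → Fin p → ℝ)
    (v : EuclideanSpace ℝ (Fin p)) :
    ∑ i, v i * ∑ j, v j * ∑ k, v k * D k j i = cubicForm D v := by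
  simp only [cubicForm, Finset.mul_sum]
  calc _ = ∑ i, ∑ k, ∑ j, v i * (v j * (v k * D k j i)) :=
        Finset.sum_congr rfl fun _ _ => Finset.sum_comm
    _ = ∑ k, ∑ i, ∑ j, v i * (v j * (v k * D k j i)) := Finset.sum_comm
    _ = ∑ k, ∑ j, ∑ i, v i * (v j * (v k * D k j i)) :=
        Finset.sum_congr rfl fun _ _ => Finset.sum_comm
    _ = _ := Finset.sum_congr rfl fun k _ => Finset.sum_congr rfl fun j _ =>
        Finset.sum_congr rfl fun i _ => by ring

lemma abs_sum_mul_sum_mul_sum_mul_sum_mul_le (T : Fin p → Fin p → Fin p → Fin p → ℝ)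
    (u : EuclideanSpace ℝ (Fin p)) {B : ℝ} (hT : ∀ i j k l, |T i j k l| ≤ B) :
    |∑ i, u i * ∑ j, u j * ∑ k, u k * ∑ l, u l * T l k j i| ≤ (∑ i, |u i|) ^ 4 * B :=
  (abs_sum_mul_le_sum_abs_mul u _ fun i => abs_sum_mul_le_sum_abs_mul u _ fun j =>
    abs_sum_mul_le_sum_abs_mul u _ fun k => abs_sum_mul_le_sum_abs_mul u _ fun l =>
      hT l k j i).trans_eq (by ring)

theorem le_taylor4_of_abs_d4_le {g : EuclideanSpace ℝ (Fin p) → ℝ}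
    {s : Set (EuclideanSpace ℝ (Fin p))} (hs : IsOpen s) (hsc : Convex ℝ s)
    (hg : ContDiffOn ℝ 4 g s) {x u : EuclideanSpace ℝ (Fin p)} (hx : x ∈ s) (hxu : x + u ∈ s)
    {B : ℝ} (hB : ∀ θ ∈ s, ∀ i j k l, |d4 g θ i j k l| ≤ B) :
    g (x + u) ≤ g x + fderiv ℝ g x u + quadraticForm (d2 g x) u / 2
      + cubicForm (d3 g x) u / 6 + (∑ i, |u i|) ^ 4 * B / 24 := by
  have hseg : ∀ t ∈ Set.Icc (0 : ℝ) 1, x + t • u ∈ s := fun t ht => hsc.add_smul_mem hx hxu ht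
  have hdiff : ∀ {F : EuclideanSpace ℝ (Fin p) → ℝ} {n : WithTop ℕ∞}, ContDiffOn ℝ n F s →
      n ≠ 0 → ∀ t ∈ Set.Icc (0 : ℝ) 1, DifferentiableAt ℝ F (x + t • u) :=
    fun hF hn t ht => (hF.differentiableOn hn).differentiableAt (hs.mem_nhds (hseg t ht))
  have hg1 := contDiffOn_d1 (m := 3) hg hs le_rfl
  have hg2 : ∀ i j, ContDiffOn ℝ 2 (fun θ => d2 g θ i j) s :=
    fun i j => contDiffOn_d1 (hg1 j) hs le_rfl i
  have hg3 : ∀ i j k, ContDiffOn ℝ 1 (fun θ => d3 g θ i j k) s :=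
    fun i j k => contDiffOn_d1 (hg2 j k) hs le_rfl i
  -- for `k ≤ 4`, `ψ k` is the `k`-th derivative of `t ↦ g (x + t • u)`
  let ψ : ℕ → ℝ → ℝ
    | 0 => fun t => g (x + t • u)
    | 1 => fun t => ∑ i, u i * d1 g (x + t • u) i
    | 2 => fun t => ∑ i, u i * ∑ j, u j * d2 g (x + t • u) j i
    | 3 => fun t => ∑ i, u i * ∑ j, u j * ∑ k, u k * d3 g (x + t • u) k j i
    | _ => fun t => ∑ i, u i * ∑ j, u j * ∑ k, u k * ∑ l, u l * d4 g (x + t • u) l k j i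
  have hψ : ∀ k < 4, ∀ t ∈ Set.Icc (0 : ℝ) 1, HasDerivAt (ψ k) (ψ (k + 1) t) t := by
    intro k hk t ht
    interval_cases k
    · exact hasDerivAt_comp_add_smul (hdiff hg (by simp) t ht)
    · exact HasDerivAt.fun_sum fun i _ =>
        (hasDerivAt_comp_add_smul (hdiff (hg1 i) (by simp) t ht)).const_mul (u i)
    · exact HasDerivAt.fun_sum fun i _ => HasDerivAt.const_mul _ <| HasDerivAt.fun_sum
        fun j _ => (hasDerivAt_comp_add_smul (hdiff (hg2 j i) (by simp) t ht)).const_mul (u j)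
    · exact HasDerivAt.fun_sum fun i _ => HasDerivAt.const_mul _ <| HasDerivAt.fun_sum
        fun j _ => HasDerivAt.const_mul _ <| HasDerivAt.fun_sum fun k _ =>
          (hasDerivAt_comp_add_smul (hdiff (hg3 k j i) (by simp) t ht)).const_mul (u k)
  have hψ4 : ∀ t ∈ Set.Icc (0 : ℝ) 1, ψ 4 t ≤ (∑ i, |u i|) ^ 4 * B := fun t ht =>
    (le_abs_self _).trans (abs_sum_mul_sum_mul_sum_mul_sum_mul_le _ u (hB _ (hseg t ht)))
  have h := le_taylorBound_of_hasDerivAt 4 ψ _ hψ hψ4 1 (Set.right_mem_Icc.2 zero_le_one)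
  simp only [taylorBound, Finset.sum_range_succ, Finset.sum_range_zero, one_pow, mul_one,
    Nat.factorial, Nat.succ_eq_add_one, Nat.reduceAdd, Nat.reduceMul, Nat.cast_ofNat,
    Nat.cast_one, div_one, zero_add] at h
  simp only [ψ, zero_smul, add_zero, one_smul, ← fderiv_apply_eq_sum_d1] at h
  rw [sum_mul_sum_mul_sum_mul_eq_cubicForm, sum_mul_sum_mul_eq_quadraticForm] at h
  linarith

lemma d2_comm {g : EuclideanSpace ℝ (Fin p) → ℝ} {x : EuclideanSpace ℝ (Fin p)}
    (hg : ContDiffAt ℝ 2 g x) (i j : Fin p) : d2 g x i j = d2 g x j i := by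
  have hdiff : DifferentiableAt ℝ (fderiv ℝ g) x :=
    (hg.fderiv_right (m := 1) le_rfl).differentiableAt one_ne_zero
  have hd2 : ∀ a b, d2 g x a b = fderiv ℝ (fderiv ℝ g) x (basisE p a) (basisE p b) :=
    fun a b => by simp [d2, d1, fderiv_clm_apply hdiff (differentiableAt_const _)]
  rw [hd2, hd2]
  exact hg.isSymmSndFDerivAt (by simp) _ _

lemma hessian_isSymm_posDef {g : EuclideanSpace ℝ (Fin p) → ℝ}
    {s : Set (EuclideanSpace ℝ (Fin p))} (hs : IsOpen s) (hg : ContDiffOn ℝ 2 g s)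
    {x : EuclideanSpace ℝ (Fin p)} (hx : x ∈ s) (ν : ℝ)
    (hpd : ∀ θ ∈ s, (Matrix.of fun i j : Fin p => -(ν⁻¹ * d2 g θ i j)).PosDef) :
    (Matrix.of fun i j : Fin p => -(ν⁻¹ * d2 g x i j)).IsSymm ∧
      (Matrix.of fun i j : Fin p => -(ν⁻¹ * d2 g x i j)).PosDef := by
  refine ⟨Matrix.IsSymm.ext fun i j => ?_, hpd x hx⟩
  simp only [Matrix.of_apply, d2_comm (hg.contDiffAt (hs.mem_nhds hx)) i j]

theorem remainder_le_of_isLocalMax {g : EuclideanSpace ℝ (Fin p) → ℝ}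
    {s : Set (EuclideanSpace ℝ (Fin p))} (hs : IsOpen s) (hsc : Convex ℝ s)
    (hg : ContDiffOn ℝ 4 g s) {B : ℝ} (hB0 : 0 ≤ B)
    (hB : ∀ θ ∈ s, ∀ i j k l, |d4 g θ i j k l| ≤ B) {x h : EuclideanSpace ℝ (Fin p)}
    (hmax : IsLocalMax g x) (hx : x ∈ s) {a ν : ℝ} (ha : 0 < a) (hν : 0 < ν)
    (hxh : x + (Real.sqrt (a * ν))⁻¹ • h ∈ s) :
    a * (g (x + (Real.sqrt (a * ν))⁻¹ • h) - g x)
        + (1 / 2) * ∑ i, ∑ j, h i * (-(ν⁻¹ * d2 g x i j)) * h j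
        - (6 * Real.sqrt (a * ν))⁻¹ * ∑ i, ∑ j, ∑ k, (ν⁻¹ * d3 g x i j k) * h i * h j * h k
      ≤ B / ν * p ^ 2 / 24 / (a * ν) * ‖h‖ ^ 4 := by
  set c := Real.sqrt (a * ν)
  have hc : 0 < c := Real.sqrt_pos.2 (mul_pos ha hν)
  have ha' : a = c ^ 2 / ν := by rw [Real.sq_sqrt (mul_pos ha hν).le]; field_simp
  have htaylor := le_taylor4_of_abs_d4_le hs hsc hg hx hxh hB
  rw [hmax.fderiv_eq_zero, zero_apply, add_zero, quadraticForm_smul,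
    cubicForm_smul] at htaylor
  have hl1 : (∑ i, |(c⁻¹ • h) i|) ^ 4 ≤ p ^ 2 * (c⁻¹ * ‖h‖) ^ 4 := by
    have := pow_le_pow_left₀ (by positivity) (sum_abs_sq_le_card_mul_norm_sq (c⁻¹ • h)) 2
    rw [norm_smul, Real.norm_of_nonneg (inv_nonneg.2 hc.le)] at this
    linarith
  have hquad : ∑ i, ∑ j, h i * (-(ν⁻¹ * d2 g x i j)) * h j = -ν⁻¹ * quadraticForm (d2 g x) h := by
    simp only [quadraticForm, Finset.mul_sum]
    exact Finset.sum_congr rfl fun i _ => Finset.sum_congr rfl fun j _ => by ring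
  have hcub : ∑ i, ∑ j, ∑ k, (ν⁻¹ * d3 g x i j k) * h i * h j * h k
      = ν⁻¹ * cubicForm (d3 g x) h := by
    simp only [cubicForm, Finset.mul_sum]
    exact Finset.sum_congr rfl fun i _ => Finset.sum_congr rfl fun j _ =>
      Finset.sum_congr rfl fun k _ => by ring
  have hscaled : a * (c⁻¹ ^ 2 * quadraticForm (d2 g x) h / 2
        + c⁻¹ ^ 3 * cubicForm (d3 g x) h / 6 + p ^ 2 * (c⁻¹ * ‖h‖) ^ 4 * B / 24)
      = ν⁻¹ * quadraticForm (d2 g x) h / 2 + (6 * c)⁻¹ * (ν⁻¹ * cubicForm (d3 g x) h)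
        + B / ν * p ^ 2 / 24 / (a * ν) * ‖h‖ ^ 4 := by
    rw [ha']
    field_simp
  have hincr : g (x + c⁻¹ • h) - g x ≤ c⁻¹ ^ 2 * quadraticForm (d2 g x) h / 2
      + c⁻¹ ^ 3 * cubicForm (d3 g x) h / 6 + p ^ 2 * (c⁻¹ * ‖h‖) ^ 4 * B / 24 := by
    linarith [mul_le_mul_of_nonneg_right hl1 hB0]
  have := mul_le_mul_of_nonneg_left hincr ha.le
  rw [hscaled] at this
  rw [hquad, hcub]
  linarith

theorem remainder_le_of_isLocalMax_of_norm_sub_le {g : EuclideanSpace ℝ (Fin p) → ℝ}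
    {θstar x h : EuclideanSpace ℝ (Fin p)} {γ B K a ν : ℝ} (hγ : 0 < γ)
    (hg : ContDiffOn ℝ 4 g (Metric.ball θstar γ)) (hB0 : 0 ≤ B)
    (hB : ∀ θ ∈ Metric.ball θstar γ, ∀ i j k l, |d4 g θ i j k l| ≤ B) (hBK : B / ν ≤ K)
    (hmax : IsLocalMax g x) (hx : ‖x - θstar‖ ≤ γ / 4) (ha : 0 < a) (hν : 0 < ν)
    (hh : ‖h‖ ≤ γ / 2 * Real.sqrt (a * ν)) :
    a * (g (x + (Real.sqrt (a * ν))⁻¹ • h) - g x)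
        + (1 / 2) * ∑ i, ∑ j, h i * (-(ν⁻¹ * d2 g x i j)) * h j
        - (6 * Real.sqrt (a * ν))⁻¹ * ∑ i, ∑ j, ∑ k, (ν⁻¹ * d3 g x i j k) * h i * h j * h k
      ≤ K * p ^ 2 / 24 / (a * ν) * ‖h‖ ^ 4 := by
  have hc : 0 < Real.sqrt (a * ν) := Real.sqrt_pos.2 (mul_pos ha hν)
  refine (remainder_le_of_isLocalMax Metric.isOpen_ball (convex_ball _ _) hg hB0 hB hmax
    (mem_ball_iff_norm.2 (by linarith)) ha hν (add_inv_smul_mem_ball hγ hc hx hh)).trans ?_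
  gcongr

end EuclideanTaylor

lemma tendsto_measure_one_of_ae_subset_union {Ω : ℕ → Type*} [∀ n, MeasurableSpace (Ω n)]
    {P : ∀ n, Measure (Ω n)} [∀ n, IsProbabilityMeasure (P n)] {A B C : ∀ n, Set (Ω n)}
    (hA : Tendsto (fun n => P n (A n)) atTop (nhds 1))
    (hB : Tendsto (fun n => P n (B n)) atTop (nhds 0))
    (hABC : ∀ n, A n ≤ᵐ[P n] (B n ∪ C n : Set (Ω n))) :
    Tendsto (fun n => P n (C n)) atTop (nhds 1) := by
  have hlow : Tendsto (fun n => P n (A n) - P n (B n)) atTop (nhds 1) := by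
    simpa using ENNReal.Tendsto.sub hA hB (Or.inl ENNReal.one_ne_top)
  refine tendsto_of_tendsto_of_tendsto_of_le_of_le hlow tendsto_const_nhds (fun n => ?_)
    fun n => prob_le_one
  exact tsub_le_iff_left.2 ((measure_mono_ae (hABC n)).trans (measure_union_le _ _))

lemma measure_le_ofReal_div_of_integral_le {Ω : Type*} [MeasurableSpace Ω] {μ : Measure Ω}
    [IsFiniteMeasure μ] {f : Ω → ℝ} (hf0 : ∀ ω, 0 ≤ f ω) (hf : Integrable f μ) {C K : ℝ}
    (hK : 0 < K) (hC : ∫ ω, f ω ∂μ ≤ C) :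
    μ {ω | K ≤ f ω} ≤ ENNReal.ofReal (C / K) := by
  have hmarkov := mul_meas_ge_le_integral_of_nonneg (Filter.Eventually.of_forall hf0) hf K
  rw [← ofReal_measureReal]
  exact ENNReal.ofReal_le_ofReal ((le_div_iff₀' hK).2 (hmarkov.trans hC))

lemma measure_lt_ofReal_add_of_ae_subset_union {Ω : Type*} [MeasurableSpace Ω] {μ : Measure Ω}
    [IsFiniteMeasure μ] {A B C : Set Ω} {b c : ℝ} (h : A ≤ᵐ[μ] (B ∪ C : Set Ω))
    (hB : μ B < ENNReal.ofReal b) (hC : μ C ≤ ENNReal.ofReal c) (hb : 0 ≤ b) (hc : 0 ≤ c) :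
    μ A < ENNReal.ofReal (b + c) :=
  calc μ A ≤ μ B + μ C := (measure_mono_ae h).trans (measure_union_le _ _)
    _ < ENNReal.ofReal b + ENNReal.ofReal c :=
      ENNReal.add_lt_add_of_lt_of_le (measure_ne_top _ _) hB hC
    _ = ENNReal.ofReal (b + c) := (ENNReal.ofReal_add hb hc).symm

theorem sufficient_conditions_for_A2'_general
    {p : ℕ} {Ω : ℕ → Type} [∀ n, MeasurableSpace (Ω n)]
    (P : ∀ n, Measure (Ω n)) [∀ n, IsProbabilityMeasure (P n)]
    (L : ∀ n, Ω n → EuclideanSpace ℝ (Fin p) → ℝ)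
    (θhat : ∀ n, Ω n → EuclideanSpace ℝ (Fin p))
    (θstar : EuclideanSpace ℝ (Fin p))
    (α : ℕ → ℝ) (γ : ℝ)
    (hLpos : ∀ n ω θ, 0 < L n ω θ)
    (hMLE : ∀ n ω θ, θ ≠ θhat n ω → L n ω θ < L n ω (θhat n ω))
    (hαpos : ∀ n, 0 < α n)
    -- assumption (A0)
    (hA0 : A0 P θhat θstar)
    (hγ : 0 < γ)
    -- (i) the log-likelihood is a.s. four times continuously differentiable near `θstar`
    (hsmooth : ∀ n, ∀ᵐ ω ∂ P n,
      ContDiffOn ℝ 4 (fun θ => Real.log (L n ω θ)) (Metric.ball θstar γ))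
    -- (ii) fourth derivatives are dominated by `M̃ n` with `sup_n E[M̃ n / n] < ∞`
    (Mt : ∀ n, Ω n → ℝ)
    (hMtnn : ∀ n ω, 0 ≤ Mt n ω)
    (hMtint : ∀ n, Integrable (fun ω => Mt n ω / (n : ℝ)) (P n))
    (hMtE : ∃ C : ℝ, ∀ n, (∫ ω, Mt n ω / (n : ℝ) ∂ P n) ≤ C)
    (hbound : ∀ n, ∀ᵐ ω ∂ P n, ∀ θ ∈ closure (Metric.ball θstar γ), ∀ i j k l : Fin p,
      |d4 (fun θ' => Real.log (L n ω θ')) θ i j k l| < Mt n ω)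
    -- (iii) the negative rescaled Hessian is positive definite on the ball w.h.p.
    (hposdef : Tendsto (fun n => P n {ω | ∀ θ ∈ Metric.ball θstar γ,
        (Matrix.of fun i j : Fin p =>
          -((n : ℝ)⁻¹ * d2 (fun θ' => Real.log (L n ω θ')) θ i j)).PosDef})
      atTop (nhds 1)) :
    -- `H n := -(1/n)·∇² log f_n(·|θ̂)` is symmetric and positive definite w.h.p. ...
    (Tendsto (fun n => P n {ω |
        (Matrix.of fun i j : Fin p =>
          -((n : ℝ)⁻¹ * d2 (fun θ' => Real.log (L n ω θ')) (θhat n ω) i j)).IsSymm ∧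
        (Matrix.of fun i j : Fin p =>
          -((n : ℝ)⁻¹ * d2 (fun θ' => Real.log (L n ω θ')) (θhat n ω) i j)).PosDef})
      atTop (nhds 1)) ∧
    -- ... and the remainder bound of (A2') holds with `δ = γ/2`, these `H n` and
    -- `S n := (1/n)·∇³ log f_n(·|θ̂)`
    (∀ ε : ℝ, 0 < ε → ∃ M : ℝ, ∃ N : ℕ, ∀ n ≥ N,
      P n {ω | ∃ h : EuclideanSpace ℝ (Fin p),
        ‖h‖ ≤ (γ / 2) * Real.sqrt (α n * (n : ℝ)) ∧
        (M / (α n * (n : ℝ))) * ‖h‖ ^ 4 <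
          α n * (Real.log (L n ω (θhat n ω + (Real.sqrt (α n * (n : ℝ)))⁻¹ • h)) -
              Real.log (L n ω (θhat n ω)))
            + (1 / 2) * ∑ i, ∑ j, h i *
                (-((n : ℝ)⁻¹ * d2 (fun θ' => Real.log (L n ω θ')) (θhat n ω) i j)) * h j
            - (6 * Real.sqrt (α n * (n : ℝ)))⁻¹ *
                ∑ i, ∑ j, ∑ k,
                  ((n : ℝ)⁻¹ * d3 (fun θ' => Real.log (L n ω θ')) (θhat n ω) i j k) *
                    h i * h j * h k} < ENNReal.ofReal ε) := by
  have hfar := hA0.1 (γ / 4) (by positivity)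
  refine ⟨tendsto_measure_one_of_ae_subset_union hposdef hfar fun n => ?_, fun ε hε => ?_⟩
  · filter_upwards [hsmooth n] with ω hsm hpd
    rcases lt_or_ge (γ / 4) ‖θhat n ω - θstar‖ with hθfar | hnear
    · exact Or.inl hθfar
    · exact Or.inr <| hessian_isSymm_posDef Metric.isOpen_ball (hsm.of_le (by norm_num))
        (mem_ball_iff_norm.2 (by linarith)) n hpd
  obtain ⟨C, hC⟩ := hMtE
  set K := 2 * |C| / ε + 1 with hK
  have hK0 : 0 < K := by positivity
  obtain ⟨N, hN⟩ := eventually_atTop.1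
    (hfar.eventually_lt_const (ENNReal.ofReal_pos.2 (half_pos hε)))
  refine ⟨K * p ^ 2 / 24, max N 1, fun n hn => ?_⟩
  have hn0 : (0 : ℝ) < n := by exact_mod_cast (le_max_right N 1).trans hn
  have hbig : P n {ω | K ≤ Mt n ω / n} ≤ ENNReal.ofReal (ε / 2) :=
    (measure_le_ofReal_div_of_integral_le (fun ω => div_nonneg (hMtnn n ω) hn0.le) (hMtint n)
      hK0 (hC n)).trans (ENNReal.ofReal_le_ofReal (by
        rw [div_le_iff₀ hK0, hK]; field_simp; linarith [le_abs_self C]))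
  rw [← add_halves ε]
  refine measure_lt_ofReal_add_of_ae_subset_union ?_ (hN n ((le_max_left N 1).trans hn)) hbig
    (half_pos hε).le (half_pos hε).le
  filter_upwards [hsmooth n, hbound n] with ω hsm hbd ⟨h, hh, hlt⟩
  rcases lt_or_ge (γ / 4) ‖θhat n ω - θstar‖ with hθfar | hnear
  · exact Or.inl hθfar
  rcases le_or_gt K (Mt n ω / n) with hlarge | hsmall
  · exact Or.inr hlarge
  exact absurd hlt (remainder_le_of_isLocalMax_of_norm_sub_le hγ hsm (hMtnn n ω)
    (fun θ hθ i j k l => (hbd θ (subset_closure hθ) i j k l).le) hsmall.le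
    (isLocalMax_log_of_lt (hLpos n ω) (hMLE n ω)) hnear (hαpos n) hn0 hh).not_gt

/-- **Proposition C.4** (fourth-order smoothness implies the higher-order tempered LAN
condition, i.e., sufficient conditions for (A2')). -/
theorem sufficient_conditions_for_A2'
    {p : ℕ} {Ω : ℕ → Type} [∀ n, MeasurableSpace (Ω n)]
    (P : ∀ n, Measure (Ω n)) [∀ n, IsProbabilityMeasure (P n)]
    (L : ∀ n, Ω n → EuclideanSpace ℝ (Fin p) → ℝ)
    (θhat : ∀ n, Ω n → EuclideanSpace ℝ (Fin p))
    (θstar : EuclideanSpace ℝ (Fin p))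
    (α : ℕ → ℝ) (γ : ℝ)
    (hLmeas : ∀ n, Measurable (Function.uncurry (L n)))
    (hLpos : ∀ n ω θ, 0 < L n ω θ)
    (hθmeas : ∀ n, Measurable (θhat n))
    (hMLE : ∀ n ω θ, θ ≠ θhat n ω → L n ω θ < L n ω (θhat n ω))
    -- tempering sequence: `α n → 0` and `α n * n → ∞`
    (hαpos : ∀ n, 0 < α n)
    (hα0 : Tendsto α atTop (nhds 0))
    (hαn : Tendsto (fun n => α n * (n : ℝ)) atTop atTop)
    -- assumption (A0)
    (hA0 : A0 P θhat θstar)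
    (hγ : 0 < γ)
    -- (i) the log-likelihood is a.s. four times continuously differentiable near `θstar`
    (hsmooth : ∀ n, ∀ᵐ ω ∂ P n,
      ContDiffOn ℝ 4 (fun θ => Real.log (L n ω θ)) (Metric.ball θstar γ))
    -- (ii) fourth derivatives are dominated by `M̃ n` with `sup_n E[M̃ n / n] < ∞`
    (Mt : ∀ n, Ω n → ℝ)
    (hMtmeas : ∀ n, Measurable (Mt n))
    (hMtnn : ∀ n ω, 0 ≤ Mt n ω)
    (hMtint : ∀ n, Integrable (fun ω => Mt n ω / (n : ℝ)) (P n))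
    (hMtE : ∃ C : ℝ, ∀ n, (∫ ω, Mt n ω / (n : ℝ) ∂ P n) ≤ C)
    (hbound : ∀ n, ∀ᵐ ω ∂ P n, ∀ θ ∈ closure (Metric.ball θstar γ), ∀ i j k l : Fin p,
      |d4 (fun θ' => Real.log (L n ω θ')) θ i j k l| < Mt n ω)
    -- (iii) the negative rescaled Hessian is positive definite on the ball w.h.p.
    (hposdef : Tendsto (fun n => P n {ω | ∀ θ ∈ Metric.ball θstar γ,
        (Matrix.of fun i j : Fin p =>
          -((n : ℝ)⁻¹ * d2 (fun θ' => Real.log (L n ω θ')) θ i j)).PosDef})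
      atTop (nhds 1)) :
    -- `H n := -(1/n)·∇² log f_n(·|θ̂)` is symmetric and positive definite w.h.p. ...
    (Tendsto (fun n => P n {ω |
        (Matrix.of fun i j : Fin p =>
          -((n : ℝ)⁻¹ * d2 (fun θ' => Real.log (L n ω θ')) (θhat n ω) i j)).IsSymm ∧
        (Matrix.of fun i j : Fin p =>
          -((n : ℝ)⁻¹ * d2 (fun θ' => Real.log (L n ω θ')) (θhat n ω) i j)).PosDef})
      atTop (nhds 1)) ∧
    -- ... and the remainder bound of (A2') holds with `δ = γ/2`, these `H n` and
    -- `S n := (1/n)·∇³ log f_n(·|θ̂)`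
    (∀ ε : ℝ, 0 < ε → ∃ M : ℝ, ∃ N : ℕ, ∀ n ≥ N,
      P n {ω | ∃ h : EuclideanSpace ℝ (Fin p),
        ‖h‖ ≤ (γ / 2) * Real.sqrt (α n * (n : ℝ)) ∧
        (M / (α n * (n : ℝ))) * ‖h‖ ^ 4 <
          α n * (Real.log (L n ω (θhat n ω + (Real.sqrt (α n * (n : ℝ)))⁻¹ • h)) -
              Real.log (L n ω (θhat n ω)))
            + (1 / 2) * ∑ i, ∑ j, h i *
                (-((n : ℝ)⁻¹ * d2 (fun θ' => Real.log (L n ω θ')) (θhat n ω) i j)) * h j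
            - (6 * Real.sqrt (α n * (n : ℝ)))⁻¹ *
                ∑ i, ∑ j, ∑ k,
                  ((n : ℝ)⁻¹ * d3 (fun θ' => Real.log (L n ω θ')) (θhat n ω) i j k) *
                    h i * h j * h k} < ENNReal.ofReal ε) :=
  sufficient_conditions_for_A2'_general P L θhat θstar α γ hLpos hMLE hαpos hA0 hγ hsmooth Mt hMtnn
    hMtint hMtE hbound hposdef
end
end
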